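/- Let A be a positive operator on H, 𝔸 = A ⊕ A on H ⊕ H, and T, S A-bounded operators. Then r_𝔸 of the diagonal operator matrix diag(T, S) equals max{r_A(T), r_A(S)}, and r_𝔸 of the antidiagonal matrix [[0, T], [S, 0]] equals √(r_A(TS)). -/

import Mathlib

open ContinuousLinearMap

variable {H : Type*} [NormedAddCommGroup H] [InnerProductSpace ℂ H] [CompleteSpace H]

/-- The seminorm `‖x‖_A = ‖A^{1/2} x‖ = √⟨Ax, x⟩` induced by a positive operator `A`. -/
noncomputable def anorm (A : H →L[ℂ] H) (x : H) : ℝ :=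
  Real.sqrt (A.reApplyInnerSelf x)

/-- `T` is `A`-bounded: `‖Tx‖_A ≤ c ‖x‖_A` for some `c > 0`. -/
def ABounded (A T : H →L[ℂ] H) : Prop :=
  ∃ c : ℝ, 0 < c ∧ ∀ x : H, anorm A (T x) ≤ c * anorm A x

/-- The operator seminorm `‖T‖_A`: the least `c ≥ 0` with `‖Tx‖_A ≤ c ‖x‖_A` for all `x`. -/
noncomputable def aNorm (A T : H →L[ℂ] H) : ℝ :=
  sInf {c : ℝ | 0 ≤ c ∧ ∀ x : H, anorm A (T x) ≤ c * anorm A x}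

/-- The `A`-spectral radius `r_A(T) = inf_{n ≥ 1} ‖T^n‖_A^{1/n}`. -/
noncomputable def aSpecRad (A T : H →L[ℂ] H) : ℝ :=
  ⨅ n : ℕ+, aNorm A (T ^ (n : ℕ)) ^ ((n : ℝ)⁻¹)

/-- The `A`-numerical radius `ω_A(T) = sup {|⟨ATx, x⟩| : ‖x‖_A = 1}`. -/
noncomputable def aNumRad (A T : H →L[ℂ] H) : ℝ :=
  sSup {c : ℝ | ∃ x : H, anorm A x = 1 ∧ c = ‖(inner ℂ (A (T x)) x : ℂ)‖}

/-- The operator on `H^d` (with the `ℓ²` product structure) given by a `d × d`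
matrix of operators: `(matOp T) x i = ∑ j, T i j (x j)`. -/
noncomputable def matOp {d : ℕ} (T : Fin d → Fin d → (H →L[ℂ] H)) :
    PiLp 2 (fun _ : Fin d => H) →L[ℂ] PiLp 2 (fun _ : Fin d => H) :=
  (((PiLp.continuousLinearEquiv 2 ℂ (fun _ : Fin d => H)).symm :
      (∀ _ : Fin d, H) →L[ℂ] PiLp 2 (fun _ : Fin d => H))) ∘L
    (ContinuousLinearMap.pi fun i => ∑ j, (T i j) ∘L
      ((ContinuousLinearMap.proj j) ∘L
        ((PiLp.continuousLinearEquiv 2 ℂ (fun _ : Fin d => H)) :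
          PiLp 2 (fun _ : Fin d => H) →L[ℂ] (∀ _ : Fin d, H))))

/-! Powers of `diag(X, Y)` are `diag(X^n, Y^n)` and `‖diag(X, Y)‖_𝔸 = max{‖X‖_A, ‖Y‖_A}`; with
the infimum formula for `r_A` and `‖X^{nm}‖_A ≤ ‖X^n‖_A^m` (to pass to a common exponent) this
gives the diagonal case. For `C = [[0, T], [S, 0]]` we have `C^2 = diag(TS, ST)`, so
`r_𝔸(C)^2 = r_𝔸(C^2) = max{r_A(TS), r_A(ST)} = r_A(TS)`, the last step because
`(TS)^{mk+1} = T (ST)^{mk} S` forces `r_A(TS)^{mk+1} ≲ ‖(ST)^m‖_A^k` for all `k`. -/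

lemma le_of_forall_mul_pow_le {a c x y : ℝ} (ha : 0 < a) (hy : 0 ≤ y)
    (h : ∀ k : ℕ, a * x ^ k ≤ c * y ^ k) : x ≤ y := by
  by_contra! hyx
  have hx : 0 < x := hy.trans_lt hyx
  rcases hy.eq_or_lt with rfl | hy
  · have := h 1
    simp only [pow_one, mul_zero] at this
    exact (mul_pos ha hx).not_ge this
  · obtain ⟨k, hk⟩ := pow_unbounded_of_one_lt (c / a) ((one_lt_div hy).2 hyx)
    have hyk : 0 < y ^ k := pow_pos hy k
    rw [div_pow, div_lt_div_iff₀ ha hyk] at hk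
    nlinarith [h k]

section

omit [CompleteSpace H]

variable {A T X Y : H →L[ℂ] H}

lemma anorm_nonneg (A : H →L[ℂ] H) (x : H) : 0 ≤ anorm A x := Real.sqrt_nonneg _

lemma anorm_zero (A : H →L[ℂ] H) : anorm A (0 : H) = 0 := by simp [anorm, reApplyInnerSelf]

lemma aNorm_nonneg (A T : H →L[ℂ] H) : 0 ≤ aNorm A T := Real.sInf_nonneg fun _ hc => hc.1

lemma aNorm_le {c : ℝ} (hc : 0 ≤ c) (h : ∀ x, anorm A (T x) ≤ c * anorm A x) :
    aNorm A T ≤ c :=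
  csInf_le ⟨0, fun _ hc => hc.1⟩ ⟨hc, h⟩

lemma aBounded_of_le {c : ℝ} (h : ∀ x, anorm A (T x) ≤ c * anorm A x) : ABounded A T :=
  ⟨max c 1, one_pos.trans_le (le_max_right _ _), fun x =>
    (h x).trans (mul_le_mul_of_nonneg_right (le_max_left _ _) (anorm_nonneg A x))⟩

lemma ABounded.anorm_apply_le (hT : ABounded A T) (x : H) :
    anorm A (T x) ≤ aNorm A T * anorm A x := by
  obtain ⟨c, hc, hcT⟩ := hT
  rcases (anorm_nonneg A x).eq_or_lt with hx | hx
  · simpa [← hx] using hcT x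
  · rw [← div_le_iff₀ hx]
    exact le_csInf ⟨c, hc.le, hcT⟩ fun b hb => (div_le_iff₀ hx).2 (hb.2 x)

lemma ABounded.anorm_mul_apply_le (hX : ABounded A X) (hY : ABounded A Y) (x : H) :
    anorm A ((X * Y) x) ≤ aNorm A X * aNorm A Y * anorm A x :=
  calc anorm A (X (Y x)) ≤ aNorm A X * anorm A (Y x) := hX.anorm_apply_le _
    _ ≤ aNorm A X * (aNorm A Y * anorm A x) :=
      mul_le_mul_of_nonneg_left (hY.anorm_apply_le x) (aNorm_nonneg A X)
    _ = aNorm A X * aNorm A Y * anorm A x := (mul_assoc _ _ _).symm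

lemma ABounded.mul (hX : ABounded A X) (hY : ABounded A Y) : ABounded A (X * Y) :=
  aBounded_of_le (hX.anorm_mul_apply_le hY)

lemma ABounded.pow (hX : ABounded A X) (n : ℕ) : ABounded A (X ^ n) := by
  induction n with
  | zero => exact aBounded_of_le (c := 1) fun x => by simp
  | succ n ih => rw [pow_succ]; exact ih.mul hX

lemma aNorm_mul_le (hX : ABounded A X) (hY : ABounded A Y) :
    aNorm A (X * Y) ≤ aNorm A X * aNorm A Y :=
  aNorm_le (mul_nonneg (aNorm_nonneg A X) (aNorm_nonneg A Y)) (hX.anorm_mul_apply_le hY)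

lemma aNorm_pow_le (hX : ABounded A X) (n : ℕ) : aNorm A (X ^ n) ≤ aNorm A X ^ n := by
  induction n with
  | zero => exact aNorm_le zero_le_one fun x => by simp
  | succ n ih =>
    rw [pow_succ, pow_succ]
    exact (aNorm_mul_le (hX.pow n) hX).trans
      (mul_le_mul_of_nonneg_right ih (aNorm_nonneg A X))

lemma aNorm_pow_mul_lt {b : ℝ} {n m : ℕ} (hX : ABounded A X) (hn : aNorm A (X ^ n) < b ^ n)
    (hm : m ≠ 0) : aNorm A (X ^ (n * m)) < b ^ (n * m) := by
  rw [pow_mul, pow_mul]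
  exact (aNorm_pow_le (hX.pow n) m).trans_lt (pow_lt_pow_left₀ hn (aNorm_nonneg A _) hm)

lemma aSpecRad_nonneg (A T : H →L[ℂ] H) : 0 ≤ aSpecRad A T :=
  Real.iInf_nonneg fun _ => Real.rpow_nonneg (aNorm_nonneg A _) _

lemma aSpecRad_pow_le_aNorm (A T : H →L[ℂ] H) {n : ℕ} (hn : n ≠ 0) :
    aSpecRad A T ^ n ≤ aNorm A (T ^ n) := by
  have hbdd : BddBelow (Set.range fun k : ℕ+ => aNorm A (T ^ (k : ℕ)) ^ ((k : ℝ)⁻¹)) :=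
    ⟨0, by rintro _ ⟨k, rfl⟩; exact Real.rpow_nonneg (aNorm_nonneg A _) _⟩
  have hle : aSpecRad A T ≤ aNorm A (T ^ n) ^ (n : ℝ)⁻¹ :=
    ciInf_le hbdd (⟨n, Nat.pos_of_ne_zero hn⟩ : ℕ+)
  calc aSpecRad A T ^ n ≤ (aNorm A (T ^ n) ^ (n : ℝ)⁻¹) ^ n :=
        pow_le_pow_left₀ (aSpecRad_nonneg A T) hle n
    _ = aNorm A (T ^ n) := Real.rpow_inv_natCast_pow (aNorm_nonneg A _) hn

lemma le_aSpecRad {b : ℝ} (hb : 0 ≤ b) (h : ∀ n ≠ 0, b ^ n ≤ aNorm A (T ^ n)) :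
    b ≤ aSpecRad A T :=
  le_ciInf fun n => by
    rw [← Real.pow_rpow_inv_natCast hb n.ne_zero]
    exact Real.rpow_le_rpow (pow_nonneg hb _) (h n n.ne_zero) (inv_nonneg.2 (Nat.cast_nonneg _))

lemma exists_aNorm_pow_lt {b : ℝ} (h : aSpecRad A T < b) :
    ∃ n ≠ 0, aNorm A (T ^ n) < b ^ n := by
  obtain ⟨n, hn⟩ := exists_lt_of_ciInf_lt h
  refine ⟨n, n.ne_zero, ?_⟩
  rw [← Real.rpow_inv_natCast_pow (aNorm_nonneg A (T ^ (n : ℕ))) n.ne_zero]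
  exact pow_lt_pow_left₀ hn (Real.rpow_nonneg (aNorm_nonneg A _) _) n.ne_zero

lemma aSpecRad_pow (hT : ABounded A T) {k : ℕ} (hk : k ≠ 0) :
    aSpecRad A (T ^ k) = aSpecRad A T ^ k := by
  refine le_antisymm ?_ (le_aSpecRad (pow_nonneg (aSpecRad_nonneg A T) k) fun n hn => ?_)
  · set b := aSpecRad A (T ^ k) ^ (k : ℝ)⁻¹
    have hb : 0 ≤ b := Real.rpow_nonneg (aSpecRad_nonneg A _) _
    have hbk : b ^ k = aSpecRad A (T ^ k) := Real.rpow_inv_natCast_pow (aSpecRad_nonneg A _) hk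
    rw [← hbk]
    refine pow_le_pow_left₀ hb (le_aSpecRad hb fun n hn => ?_) k
    rw [← pow_le_pow_iff_left₀ (pow_nonneg hb n) (aNorm_nonneg A _) hk]
    calc (b ^ n) ^ k = aSpecRad A (T ^ k) ^ n := by rw [← pow_mul, mul_comm, pow_mul, hbk]
      _ ≤ aNorm A ((T ^ k) ^ n) := aSpecRad_pow_le_aNorm A _ hn
      _ = aNorm A ((T ^ n) ^ k) := by rw [← pow_mul, ← pow_mul, mul_comm]
      _ ≤ aNorm A (T ^ n) ^ k := aNorm_pow_le (hT.pow n) k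
  · rw [← pow_mul, ← pow_mul]
    exact aSpecRad_pow_le_aNorm A T (mul_ne_zero hk hn)

lemma aSpecRad_mul_comm_le (hX : ABounded A X) (hY : ABounded A Y) :
    aSpecRad A (X * Y) ≤ aSpecRad A (Y * X) := by
  refine le_aSpecRad (aSpecRad_nonneg A _) fun m hm => ?_
  rcases (aSpecRad_nonneg A (X * Y)).eq_or_lt with hr | hr
  · rw [← hr, zero_pow hm]
    exact aNorm_nonneg A _
  set r := aSpecRad A (X * Y)
  refine le_of_forall_mul_pow_le hr (aNorm_nonneg A _) (c := aNorm A X * aNorm A Y) fun k => ?_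
  have hXY : (X * Y) ^ (m * k + 1) = X * (Y * X) ^ (m * k) * Y := by
    rw [pow_succ, ← mul_assoc, mul_pow_mul]
  calc r * (r ^ m) ^ k = r ^ (m * k + 1) := by ring
    _ ≤ aNorm A ((X * Y) ^ (m * k + 1)) := aSpecRad_pow_le_aNorm A _ (Nat.succ_ne_zero _)
    _ ≤ aNorm A X * aNorm A ((Y * X) ^ (m * k)) * aNorm A Y := by
      rw [hXY]
      refine (aNorm_mul_le (hX.mul ((hY.mul hX).pow _)) hY).trans ?_
      exact mul_le_mul_of_nonneg_right (aNorm_mul_le hX ((hY.mul hX).pow _)) (aNorm_nonneg A Y)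
    _ ≤ aNorm A X * aNorm A Y * aNorm A ((Y * X) ^ m) ^ k := by
      rw [mul_right_comm, pow_mul]
      exact mul_le_mul_of_nonneg_left (aNorm_pow_le ((hY.mul hX).pow m) k)
        (mul_nonneg (aNorm_nonneg A X) (aNorm_nonneg A Y))

lemma aSpecRad_mul_comm (hX : ABounded A X) (hY : ABounded A Y) :
    aSpecRad A (X * Y) = aSpecRad A (Y * X) :=
  (aSpecRad_mul_comm_le hX hY).antisymm (aSpecRad_mul_comm_le hY hX)

lemma aSpecRad_eq_max_of_aNorm_pow_eq_max {K : Type*} [NormedAddCommGroup K]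
    [InnerProductSpace ℂ K] {B D : K →L[ℂ] K} (hX : ABounded A X) (hY : ABounded A Y)
    (h : ∀ n, aNorm B (D ^ n) = max (aNorm A (X ^ n)) (aNorm A (Y ^ n))) :
    aSpecRad B D = max (aSpecRad A X) (aSpecRad A Y) := by
  refine le_antisymm (le_of_forall_gt fun b hb => ?_) (max_le ?_ ?_)
  · obtain ⟨n, hn0, hn⟩ := exists_aNorm_pow_lt ((le_max_left _ _).trans_lt hb)
    obtain ⟨m, hm0, hm⟩ := exists_aNorm_pow_lt ((le_max_right _ _).trans_lt hb)
    have hb0 : 0 ≤ b := (aSpecRad_nonneg A X).trans ((le_max_left _ _).trans hb.le)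
    rw [← pow_lt_pow_iff_left₀ (aSpecRad_nonneg B D) hb0 (mul_ne_zero hn0 hm0)]
    calc aSpecRad B D ^ (n * m) ≤ aNorm B (D ^ (n * m)) :=
          aSpecRad_pow_le_aNorm B D (mul_ne_zero hn0 hm0)
      _ < b ^ (n * m) := by
        rw [h, mul_comm n m]
        exact max_lt (mul_comm m n ▸ aNorm_pow_mul_lt hX hn hm0) (aNorm_pow_mul_lt hY hm hn0)
  · exact le_aSpecRad (aSpecRad_nonneg A X) fun n hn =>
      (aSpecRad_pow_le_aNorm A X hn).trans ((h n).symm ▸ le_max_left _ _)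
  · exact le_aSpecRad (aSpecRad_nonneg A Y) fun n hn =>
      (aSpecRad_pow_le_aNorm A Y hn).trans ((h n).symm ▸ le_max_right _ _)

noncomputable abbrev diagOp (X Y : H →L[ℂ] H) := matOp ![![X, 0], ![0, Y]]

noncomputable abbrev antidiagOp (X Y : H →L[ℂ] H) := matOp ![![0, X], ![Y, 0]]

lemma matOp_apply {d : ℕ} (T : Fin d → Fin d → H →L[ℂ] H) (v : PiLp 2 fun _ : Fin d => H)
    (i : Fin d) : matOp T v i = ∑ j, T i j (v j) := by
  simp [matOp]

lemma diagOp_apply (v : PiLp 2 fun _ : Fin 2 => H) :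
    diagOp X Y v = WithLp.toLp 2 ![X (v 0), Y (v 1)] := by
  ext i; fin_cases i <;> simp [matOp_apply]

lemma antidiagOp_apply (v : PiLp 2 fun _ : Fin 2 => H) :
    antidiagOp X Y v = WithLp.toLp 2 ![X (v 1), Y (v 0)] := by
  ext i; fin_cases i <;> simp [matOp_apply]

lemma diagOp_mul (X Y X' Y' : H →L[ℂ] H) :
    diagOp X Y * diagOp X' Y' = diagOp (X * X') (Y * Y') := by
  ext v i; fin_cases i <;> simp [diagOp_apply]

lemma diagOp_pow (X Y : H →L[ℂ] H) (n : ℕ) : diagOp X Y ^ n = diagOp (X ^ n) (Y ^ n) := by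
  induction n with
  | zero => ext v i; fin_cases i <;> simp [diagOp_apply]
  | succ n ih => rw [pow_succ, ih, diagOp_mul, ← pow_succ, ← pow_succ]

lemma antidiagOp_sq (X Y : H →L[ℂ] H) : antidiagOp X Y ^ 2 = diagOp (X * Y) (Y * X) := by
  ext v i; fin_cases i <;> simp [sq, antidiagOp_apply, diagOp_apply]

lemma antidiagOp_eq_diagOp_mul (X Y : H →L[ℂ] H) :
    antidiagOp X Y = diagOp X Y * antidiagOp 1 1 := by
  ext v i; fin_cases i <;> simp [antidiagOp_apply, diagOp_apply]

lemma anorm_diagOp_sq (hA : A.IsPositive) (v : PiLp 2 fun _ : Fin 2 => H) :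
    anorm (diagOp A A) v ^ 2 = anorm A (v 0) ^ 2 + anorm A (v 1) ^ 2 := by
  have hdiag : (diagOp A A).reApplyInnerSelf v =
      A.reApplyInnerSelf (v 0) + A.reApplyInnerSelf (v 1) := by
    simp [reApplyInnerSelf, diagOp_apply, PiLp.inner_apply, Fin.sum_univ_two]
  simp only [anorm]
  rw [Real.sq_sqrt (hA.2 _), Real.sq_sqrt (hA.2 _), hdiag,
    Real.sq_sqrt (add_nonneg (hA.2 _) (hA.2 _))]

lemma anorm_diagOp_toLp_fst (hA : A.IsPositive) (x : H) :
    anorm (diagOp A A) (WithLp.toLp 2 ![x, 0]) = anorm A x := by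
  rw [← pow_left_inj₀ (anorm_nonneg _ _) (anorm_nonneg _ _) two_ne_zero, anorm_diagOp_sq hA]
  simp [anorm_zero]

lemma anorm_diagOp_toLp_snd (hA : A.IsPositive) (y : H) :
    anorm (diagOp A A) (WithLp.toLp 2 ![0, y]) = anorm A y := by
  rw [← pow_left_inj₀ (anorm_nonneg _ _) (anorm_nonneg _ _) two_ne_zero, anorm_diagOp_sq hA]
  simp [anorm_zero]

lemma anorm_diagOp_apply_le (hA : A.IsPositive) (hX : ABounded A X) (hY : ABounded A Y)
    (v : PiLp 2 fun _ : Fin 2 => H) :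
    anorm (diagOp A A) (diagOp X Y v) ≤ max (aNorm A X) (aNorm A Y) * anorm (diagOp A A) v := by
  set M := max (aNorm A X) (aNorm A Y)
  have hM : 0 ≤ M := (aNorm_nonneg A X).trans (le_max_left _ _)
  have h0 : anorm A (X (v 0)) ≤ M * anorm A (v 0) := (hX.anorm_apply_le _).trans
    (mul_le_mul_of_nonneg_right (le_max_left _ _) (anorm_nonneg A _))
  have h1 : anorm A (Y (v 1)) ≤ M * anorm A (v 1) := (hY.anorm_apply_le _).trans
    (mul_le_mul_of_nonneg_right (le_max_right _ _) (anorm_nonneg A _))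
  rw [← pow_le_pow_iff_left₀ (anorm_nonneg _ _) (mul_nonneg hM (anorm_nonneg _ _)) two_ne_zero,
    mul_pow, anorm_diagOp_sq hA, anorm_diagOp_sq hA, diagOp_apply]
  calc anorm A (X (v 0)) ^ 2 + anorm A (Y (v 1)) ^ 2
      ≤ (M * anorm A (v 0)) ^ 2 + (M * anorm A (v 1)) ^ 2 :=
        add_le_add (pow_le_pow_left₀ (anorm_nonneg A _) h0 2)
          (pow_le_pow_left₀ (anorm_nonneg A _) h1 2)
    _ = M ^ 2 * (anorm A (v 0) ^ 2 + anorm A (v 1) ^ 2) := by ring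

lemma aBounded_diagOp (hA : A.IsPositive) (hX : ABounded A X) (hY : ABounded A Y) :
    ABounded (diagOp A A) (diagOp X Y) :=
  aBounded_of_le (anorm_diagOp_apply_le hA hX hY)

lemma aBounded_antidiagOp (hA : A.IsPositive) (hX : ABounded A X) (hY : ABounded A Y) :
    ABounded (diagOp A A) (antidiagOp X Y) := by
  have hswap : ABounded (diagOp A A) (antidiagOp 1 1) := aBounded_of_le (c := 1) fun v => by
    rw [one_mul]
    refine le_of_eq ?_
    rw [← pow_left_inj₀ (anorm_nonneg _ _) (anorm_nonneg _ _) two_ne_zero,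
      anorm_diagOp_sq hA, anorm_diagOp_sq hA, antidiagOp_apply]
    simp [add_comm]
  rw [antidiagOp_eq_diagOp_mul]
  exact (aBounded_diagOp hA hX hY).mul hswap

lemma aNorm_diagOp (hA : A.IsPositive) (hX : ABounded A X) (hY : ABounded A Y) :
    aNorm (diagOp A A) (diagOp X Y) = max (aNorm A X) (aNorm A Y) := by
  have hD := aBounded_diagOp hA hX hY
  refine le_antisymm (aNorm_le ((aNorm_nonneg A X).trans (le_max_left _ _))
    (anorm_diagOp_apply_le hA hX hY)) (max_le ?_ ?_)
  · refine aNorm_le (aNorm_nonneg _ _) fun x => ?_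
    simpa [diagOp_apply, anorm_diagOp_toLp_fst hA] using
      hD.anorm_apply_le (WithLp.toLp 2 ![x, 0])
  · refine aNorm_le (aNorm_nonneg _ _) fun y => ?_
    simpa [diagOp_apply, anorm_diagOp_toLp_snd hA] using
      hD.anorm_apply_le (WithLp.toLp 2 ![0, y])

lemma aSpecRad_diagOp (hA : A.IsPositive) (hX : ABounded A X) (hY : ABounded A Y) :
    aSpecRad (diagOp A A) (diagOp X Y) = max (aSpecRad A X) (aSpecRad A Y) :=
  aSpecRad_eq_max_of_aNorm_pow_eq_max hX hY fun n => by
    rw [diagOp_pow, aNorm_diagOp hA (hX.pow n) (hY.pow n)]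

end

/-- with `𝔸 = diag(A, A)` on `H ⊕ H`,
`r_𝔸(diag(T, S)) = max{r_A(T), r_A(S)}` and `r_𝔸([[0,T],[S,0]]) = √(r_A(TS))`. -/
theorem stmt12 (A T S : H →L[ℂ] H) (hA : A.IsPositive)
    (hT : ABounded A T) (hS : ABounded A S) :
    aSpecRad (matOp ![![A, 0], ![0, A]]) (matOp ![![T, 0], ![0, S]]) =
        max (aSpecRad A T) (aSpecRad A S) ∧
      aSpecRad (matOp ![![A, 0], ![0, A]]) (matOp ![![0, T], ![S, 0]]) =
        Real.sqrt (aSpecRad A (T * S)) := by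
  refine ⟨aSpecRad_diagOp hA hT hS, ?_⟩
  have hsq : aSpecRad (diagOp A A) (antidiagOp T S) ^ 2 = aSpecRad A (T * S) := by
    rw [← aSpecRad_pow (aBounded_antidiagOp hA hT hS) two_ne_zero, antidiagOp_sq,
      aSpecRad_diagOp hA (hT.mul hS) (hS.mul hT), aSpecRad_mul_comm hS hT, max_self]
  rw [← hsq, Real.sqrt_sq (aSpecRad_nonneg _ _)]
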